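/- arXiv:2412.14608 — 10 statements merged into one kernel-verified Lean document; each statement's English description precedes it below -/
import Mathlib

section
/- Let P ⊆ ℚ^d be a vector space, Z an orthant in ℚ^d, and I ⊆ Fin d a sign-reflecting projection for P with respect to Z (i.e., for all v ∈ P, if the projection v|_I lies in Z|_I then v ∈ Z). Then every vector in P is uniquely determined by its projection onto I: for all v, v' ∈ P, if v|_I = v'|_I then v = v'. -/
/-- A sign-reflecting projection is injective on the subspace. -/
theorem stmt0 {d : ℕ} (P : Submodule ℚ (Fin d → ℚ)) (t : Fin d → ℚ)
    (ht : ∀ i, t i = 1 ∨ t i = -1)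
    (I : Finset (Fin d))
    (hsr : ∀ v ∈ P, (∀ i ∈ I, 0 ≤ v i * t i) → (∀ i, 0 ≤ v i * t i)) :
    ∀ v ∈ P, ∀ v' ∈ P, (∀ i ∈ I, v i = v' i) → v = v' := by
  intro v hv v' hv' hI
  set w := v - v' with hw
  have hwP : w ∈ P := P.sub_mem hv hv'
  have hwI : ∀ i ∈ I, w i = 0 := by
    intro i hi; simp [hw, hI i hi]
  have h1 : ∀ i, 0 ≤ w i * t i := by
    apply hsr w hwP
    intro i hi; simp [hwI i hi]
  have h2 : ∀ i, 0 ≤ (-w) i * t i := by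
    apply hsr (-w) (P.neg_mem hwP)
    intro i hi; simp [hwI i hi]
  have hw0 : w = 0 := by
    funext i
    have h2' : w i * t i ≤ 0 := by have := h2 i; simp at this; linarith
    have : w i * t i = 0 := le_antisymm h2' (h1 i)
    rcases ht i with h | h <;> simp [h] at this <;> simpa using this
  have := sub_eq_zero.mp hw0
  exact this
end

section
/- Let P ⊆ ℚ^d (d ≥ 2) be a 2-dimensional subspace and Z an orthant in ℚ^d such that P ∩ Z contains two linearly independent vectors. Then there exists a set I ⊆ Fin d with |I| = 2 that is a sign-reflecting projection for P with respect to Z. -/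
/-- Existence of a 2-element sign-reflecting projection for a plane
meeting an orthant in two linearly independent vectors. -/
theorem stmt1 {d : ℕ} (hd : 2 ≤ d) (P : Submodule ℚ (Fin d → ℚ))
    (hP : Module.finrank ℚ P = 2)
    (t : Fin d → ℚ) (ht : ∀ i, t i = 1 ∨ t i = -1)
    (v₁ v₂ : Fin d → ℚ) (hv₁ : v₁ ∈ P) (hv₂ : v₂ ∈ P)
    (hz₁ : ∀ i, 0 ≤ v₁ i * t i) (hz₂ : ∀ i, 0 ≤ v₂ i * t i)
    (hind : LinearIndependent ℚ ![v₁, v₂]) :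
    ∃ I : Finset (Fin d), I.card = 2 ∧
      ∀ v ∈ P, (∀ i ∈ I, 0 ≤ v i * t i) → (∀ i, 0 ≤ v i * t i) := by
  classical
  set f : Fin d → ℚ := fun k => v₁ k * t k with hf
  set g : Fin d → ℚ := fun k => v₂ k * t k with hg
  have ht2 : ∀ k, t k * t k = 1 := fun k => by rcases ht k with h | h <;> rw [h] <;> norm_num
  have hf0 : ∀ k, 0 ≤ f k := hz₁
  have hg0 : ∀ k, 0 ≤ g k := hz₂
  -- span {v₁, v₂} = P
  have hrange : Set.range ![v₁, v₂] = {v₁, v₂} := by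
    simp [Matrix.range_cons, Matrix.range_empty, Set.pair_comm]
  have hle : Submodule.span ℚ {v₁, v₂} ≤ P := by
    rw [Submodule.span_le]
    rintro x hx
    rcases hx with rfl | rfl
    · exact hv₁
    · exact hv₂
  have hfr : Module.finrank ℚ (Submodule.span ℚ ({v₁, v₂} : Set (Fin d → ℚ))) = 2 := by
    rw [← hrange, finrank_span_eq_card hind]; simp
  have hspan : Submodule.span ℚ ({v₁, v₂} : Set (Fin d → ℚ)) = P :=
    Submodule.eq_of_le_of_finrank_le hle (by rw [hP, hfr])
  -- decomposition of v k * t k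
  have hdecomp : ∀ v ∈ P, ∃ a b : ℚ, ∀ k, v k * t k = a * f k + b * g k := by
    intro v hv
    rw [← hspan] at hv
    obtain ⟨a, b, hab⟩ := Submodule.mem_span_pair.mp hv
    refine ⟨a, b, fun k => ?_⟩
    have : v k = a * v₁ k + b * v₂ k := by
      rw [← hab]; simp [Pi.add_apply]
    rw [this, hf, hg]; ring
  -- S : coords with nonzero normal
  set S : Finset (Fin d) := Finset.univ.filter (fun k => 0 < f k + g k) with hSdef
  have hmemS : ∀ k, k ∈ S ↔ 0 < f k + g k := by intro k; simp [hSdef]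
  have hSne : S.Nonempty := by
    by_contra h
    have hz : v₁ = 0 := by
      funext k
      have hk : ¬ 0 < f k + g k := fun hk => h ⟨k, (hmemS k).2 hk⟩
      have h1 := hf0 k; have h2 := hg0 k
      have hfk : f k = 0 := by linarith
      have h3 : f k * t k = v₁ k := by
        show (v₁ k * t k) * t k = v₁ k
        rw [mul_assoc, ht2 k, mul_one]
      rw [← h3, hfk, zero_mul]; simp
    exact hind.ne_zero 0 (by simpa using hz)
  obtain ⟨i, hiS, hi⟩ := S.exists_min_image (fun k => g k / (f k + g k)) hSne
  obtain ⟨j, hjS, hj⟩ := S.exists_max_image (fun k => g k / (f k + g k)) hSne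
  -- convert ratio comparison to cross product
  have hcross : ∀ p q : Fin d, p ∈ S → q ∈ S →
      g p / (f p + g p) ≤ g q / (f q + g q) → g p * f q ≤ g q * f p := by
    intro p q hp hq hle
    have hp' := (hmemS p).1 hp
    have hq' := (hmemS q).1 hq
    rw [div_le_div_iff₀ hp' hq'] at hle
    nlinarith
  have crossik : ∀ k ∈ S, g i * f k ≤ g k * f i := fun k hk => hcross i k hiS hk (hi k hk)
  have crosskj : ∀ k ∈ S, g k * f j ≤ g j * f k := fun k hk => hcross k j hk hjS (hj k hk)
  -- the key implication given constraints at i and j (in degenerate case only i matters)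
  have main : ∀ a b : ℚ, 0 ≤ a * f i + b * g i → 0 ≤ a * f j + b * g j →
      ∀ k, 0 ≤ a * f k + b * g k := by
    intro a b hA hB k
    by_cases hk : k ∈ S
    · have hkS := (hmemS k).1 hk
      have hC := crosskj k hk  -- g k * f j ≤ g j * f k
      have hD := crossik k hk  -- g i * f k ≤ g k * f i
      have hE := crossik j hjS -- g i * f j ≤ g j * f i
      rcases lt_or_eq_of_le hE with hE' | hE'
      · -- nondegenerate: cross(i,j) > 0
        have identity : (a * f k + b * g k) * (g j * f i - g i * f j)
            = (f k * g j - g k * f j) * (a * f i + b * g i)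
              + (f i * g k - g i * f k) * (a * f j + b * g j) := by ring
        nlinarith [mul_nonneg (by linarith : (0:ℚ) ≤ f k * g j - g k * f j) hA,
          mul_nonneg (by linarith : (0:ℚ) ≤ f i * g k - g i * f k) hB]
      · -- degenerate: all normals parallel; then cross(i,k) = 0
        have hDk : g i * f k = g k * f i := by
          rcases lt_or_eq_of_le (hf0 j) with hfj | hfj
          · have h1 : g k * f j * f i ≤ g j * f k * f i :=
              mul_le_mul_of_nonneg_right hC (hf0 i)
            have h2' : g i * f j * f k = g j * f i * f k := by rw [hE']
            have h2 : f j * (g k * f i) ≤ f j * (g i * f k) := by nlinarith [h1, h2']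
            have h3 : g k * f i ≤ g i * f k := le_of_mul_le_mul_left h2 hfj
            linarith
          · have hgj : 0 < g j := by have := (hmemS j).1 hjS; linarith
            have hfi : f i = 0 := by
              have h4 : g j * f i = 0 := by rw [← hE', ← hfj]; ring
              rcases mul_eq_zero.mp h4 with h | h
              · exact absurd h (ne_of_gt hgj)
              · exact h
            have h5 : g i * f k = 0 := by
              have h6 : g i * f k ≤ 0 := by rw [hfi] at hD; linarith
              have h7 : 0 ≤ g i * f k := mul_nonneg (hg0 i) (hf0 k)
              linarith
            rw [h5, hfi, mul_zero]
        -- (a f k + b g k)(f i + g i) = (a f i + b g i)(f k + g k)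
        have hiP := (hmemS i).1 hiS
        have hkey : (a * f k + b * g k) * (f i + g i) = (a * f i + b * g i) * (f k + g k) := by
          linear_combination (a - b) * hDk
        nlinarith [mul_nonneg hA (by linarith [hf0 k, hg0 k] : (0:ℚ) ≤ f k + g k)]
    · have hk' : ¬ 0 < f k + g k := fun h => hk ((hmemS k).2 h)
      have : f k = 0 := by linarith [hf0 k, hg0 k]
      have h2 : g k = 0 := by linarith [hf0 k, hg0 k]
      rw [this, h2]; simp
  -- build I
  have : ∃ j' : Fin d, j' ≠ i ∧ ∀ a b : ℚ, 0 ≤ a * f i + b * g i → 0 ≤ a * f j' + b * g j' →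
      ∀ k, 0 ≤ a * f k + b * g k := by
    by_cases hij : j = i
    · haveI : Nontrivial (Fin d) := Fin.nontrivial_iff_two_le.mpr hd
      obtain ⟨j', hj'⟩ := exists_ne i
      refine ⟨j', hj', fun a b hA _ => main a b hA ?_⟩
      rw [hij] at *; exact hA
    · exact ⟨j, hij, main⟩
  obtain ⟨j', hj'ne, hmain⟩ := this
  refine ⟨{i, j'}, ?_, ?_⟩
  · rw [Finset.card_insert_of_notMem (by simpa using hj'ne.symm)]; simp
  · intro v hv hvI k
    obtain ⟨a, b, hab⟩ := hdecomp v hv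
    rw [hab k]
    have hAi : 0 ≤ a * f i + b * g i := by rw [← hab i]; exact hvI i (by simp)
    have hAj : 0 ≤ a * f j' + b * g j' := by rw [← hab j']; exact hvI j' (by simp)
    exact hmain a b hAi hAj k
end

section
/- Let P ⊆ ℚ^d be a 2-dimensional subspace, Z an orthant, and I = {i₁, i₂} a sign-reflecting projection for P w.r.t. Z. Suppose P is spanned by linearly independent integer vectors v₁, v₂ of max norm at most N. Then for every w ∈ P ∩ Z ∩ ℤ^d and every coordinate i in the support of P (i.e., some vector of P is nonzero at i), we have min(|w(i₁)|, |w(i₂)|)/(2N²) ≤ |w(i)| ≤ 2N²·(|w(i₁)| + |w(i₂)|). -/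
/-- Component bounds via a sign-reflecting projection. -/
theorem stmt3 {d : ℕ} (t : Fin d → ℚ) (ht : ∀ i, t i = 1 ∨ t i = -1)
    (v₁ v₂ : Fin d → ℤ) (N : ℤ)
    (hN₁ : ∀ i, |v₁ i| ≤ N) (hN₂ : ∀ i, |v₂ i| ≤ N)
    (hind : LinearIndependent ℚ ![(fun i => (v₁ i : ℚ)), (fun i => (v₂ i : ℚ))])
    (P : Submodule ℚ (Fin d → ℚ))
    (hP : P = Submodule.span ℚ {(fun i => (v₁ i : ℚ)), (fun i => (v₂ i : ℚ))})
    (i₁ i₂ : Fin d) (hne : i₁ ≠ i₂)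
    (hsr : ∀ v ∈ P, (0 ≤ v i₁ * t i₁ ∧ 0 ≤ v i₂ * t i₂) → ∀ i, 0 ≤ v i * t i) :
    ∀ w : Fin d → ℤ, (fun i => (w i : ℚ)) ∈ P → (∀ i, 0 ≤ (w i : ℚ) * t i) →
      ∀ i : Fin d, (∃ v ∈ P, v i ≠ 0) →
        (min |(w i₁ : ℚ)| |(w i₂ : ℚ)|) / (2 * (N : ℚ) ^ 2) ≤ |(w i : ℚ)| ∧
        |(w i : ℚ)| ≤ 2 * (N : ℚ) ^ 2 * (|(w i₁ : ℚ)| + |(w i₂ : ℚ)|) := by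
  intro w hw hwZ i hi
  set V₁ : Fin d → ℚ := fun j => (v₁ j : ℚ) with hV₁
  set V₂ : Fin d → ℚ := fun j => (v₂ j : ℚ) with hV₂
  -- facts about t
  have ht2 : ∀ j, t j * t j = 1 := fun j => by rcases ht j with h | h <;> rw [h] <;> norm_num
  have htabs : ∀ j, |t j| = 1 := fun j => by rcases ht j with h | h <;> rw [h] <;> norm_num
  have habs_eq : ∀ (x : ℚ) (j : Fin d), 0 ≤ x * t j → |x| = x * t j := by
    intro x j hx
    calc |x| = |x| * |t j| := by rw [htabs j, mul_one]
    _ = |x * t j| := (abs_mul x (t j)).symm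
    _ = x * t j := abs_of_nonneg hx
  -- pair independence, unpacked
  have hpair : ∀ a b : ℚ, a • V₁ + b • V₂ = 0 → a = 0 ∧ b = 0 :=
    LinearIndependent.pair_iff.mp hind
  -- N ≥ 1
  have hNQ : (1 : ℚ) ≤ (N : ℚ) := by
    have hv1 : V₁ ≠ 0 := by
      intro h0
      have := hpair 1 0 (by rw [h0]; simp)
      exact one_ne_zero this.1
    have : ∃ j, v₁ j ≠ 0 := by
      by_contra h; push_neg at h
      exact hv1 (funext fun j => by simp [hV₁, h j])
    obtain ⟨j, hj⟩ := this
    have h1 : (1 : ℤ) ≤ |v₁ j| := Int.one_le_abs hj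
    exact_mod_cast le_trans h1 (hN₁ j)
  have h2N2pos : (0 : ℚ) < 2 * (N : ℚ) ^ 2 := by nlinarith
  -- any vector of P vanishing on {i₁, i₂} is zero
  have hzero : ∀ v ∈ P, v i₁ = 0 → v i₂ = 0 → v = 0 := by
    intro v hv h1 h2
    have h3 := hsr v hv ⟨by rw [h1]; simp, by rw [h2]; simp⟩
    have h4 := hsr (-v) (P.neg_mem hv) ⟨by simp [h1], by simp [h2]⟩
    funext j
    have e3 := h3 j
    have e4 := h4 j
    simp only [Pi.neg_apply, neg_mul] at e4
    have hvt : v j * t j = 0 := le_antisymm (by linarith) e3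
    show v j = 0
    calc v j = (v j * t j) * t j := by rw [mul_assoc, ht2 j, mul_one]
    _ = 0 := by rw [hvt, zero_mul]
  -- decompose w
  rw [hP] at hw
  obtain ⟨a, b, hab⟩ := Submodule.mem_span_pair.mp hw
  have hwj : ∀ j, (w j : ℚ) = a * (v₁ j : ℚ) + b * (v₂ j : ℚ) := by
    intro j
    have := congrFun hab j
    simpa [hV₁, hV₂] using this.symm
  -- support at i
  obtain ⟨v, hvP, hvi⟩ := hi
  rw [hP] at hvP
  obtain ⟨c, e, hce⟩ := Submodule.mem_span_pair.mp hvP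
  have hvj : v i = c * (v₁ i : ℚ) + e * (v₂ i : ℚ) := by
    have := congrFun hce i
    simpa [hV₁, hV₂] using this.symm
  -- determinant
  set Dz : ℤ := v₁ i₁ * v₂ i₂ - v₁ i₂ * v₂ i₁ with hDzdef
  have hDz : Dz ≠ 0 := by
    intro hD0
    have hD0Q : (v₁ i₁ : ℚ) * (v₂ i₂ : ℚ) - (v₁ i₂ : ℚ) * (v₂ i₁ : ℚ) = 0 := by
      exact_mod_cast congrArg (fun (x : ℤ) => (x : ℚ)) hD0
    -- step at i₁
    have step : ∀ j : Fin d, (v₁ j : ℚ) * (v₂ i₂ : ℚ) - (v₁ i₂ : ℚ) * (v₂ j : ℚ) = 0 →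
        v₁ j = 0 ∧ v₂ j = 0 → True := fun _ _ _ => trivial
    have key : ∀ (c₁ c₂ : ℚ), c₁ * (v₁ i₁ : ℚ) + c₂ * (v₂ i₁ : ℚ) = 0 →
        c₁ * (v₁ i₂ : ℚ) + c₂ * (v₂ i₂ : ℚ) = 0 → c₁ = 0 ∧ c₂ = 0 := by
      intro c₁ c₂ e1 e2
      have hu : (c₁ • V₁ + c₂ • V₂) ∈ P := by
        rw [hP]; exact Submodule.mem_span_pair.mpr ⟨c₁, c₂, rfl⟩
      have hu1 : (c₁ • V₁ + c₂ • V₂) i₁ = 0 := by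
        simpa [hV₁, hV₂] using e1
      have hu2 : (c₁ • V₁ + c₂ • V₂) i₂ = 0 := by
        simpa [hV₁, hV₂] using e2
      exact hpair c₁ c₂ (hzero _ hu hu1 hu2)
    have s1 := key (v₂ i₁ : ℚ) (-(v₁ i₁ : ℚ)) (by ring) (by linarith [hD0Q, (by ring : (v₂ i₁:ℚ) * (v₁ i₂:ℚ) + -(v₁ i₁:ℚ) * (v₂ i₂:ℚ) = -((v₁ i₁:ℚ) * (v₂ i₂:ℚ) - (v₁ i₂:ℚ) * (v₂ i₁:ℚ)))])
    have s2 := key (v₂ i₂ : ℚ) (-(v₁ i₂ : ℚ)) (by linarith [hD0Q, (by ring : (v₂ i₂:ℚ) * (v₁ i₁:ℚ) + -(v₁ i₂:ℚ) * (v₂ i₁:ℚ) = (v₁ i₁:ℚ) * (v₂ i₂:ℚ) - (v₁ i₂:ℚ) * (v₂ i₁:ℚ))]) (by ring)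
    -- now v₁ i₁ = v₁ i₂ = 0, so V₁ = 0, contradiction
    have h11 : (v₁ i₁ : ℚ) = 0 := by have := s1.2; linarith [neg_eq_zero.mp this]
    have h12 : (v₁ i₂ : ℚ) = 0 := by have := s2.2; linarith [neg_eq_zero.mp this]
    have hV1P : V₁ ∈ P := by
      rw [hP]; exact Submodule.mem_span_pair.mpr ⟨1, 0, by simp⟩
    have hV10 : V₁ = 0 := hzero V₁ hV1P (by simpa [hV₁] using h11) (by simpa [hV₁] using h12)
    have := hpair 1 0 (by rw [hV10]; simp)
    exact one_ne_zero this.1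
  -- bound helper
  have keybound : ∀ x y z u : ℤ, |x| ≤ N → |y| ≤ N → |z| ≤ N → |u| ≤ N →
      |x * y - z * u| ≤ 2 * N ^ 2 := by
    intro x y z u hx hy hz hu
    have hNnn : (0 : ℤ) ≤ N := le_trans (abs_nonneg x) hx
    have h1 : |x * y| ≤ N * N := by
      rw [abs_mul]
      exact mul_le_mul hx hy (abs_nonneg _) hNnn
    have h2 : |z * u| ≤ N * N := by
      rw [abs_mul]
      exact mul_le_mul hz hu (abs_nonneg _) hNnn
    calc |x * y - z * u| ≤ |x * y| + |z * u| := abs_sub _ _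
    _ ≤ 2 * N ^ 2 := by nlinarith
  set Az : ℤ := v₂ i₂ * v₁ i - v₁ i₂ * v₂ i with hAzdef
  set Bz : ℤ := v₁ i₁ * v₂ i - v₂ i₁ * v₁ i with hBzdef
  have hDle : |Dz| ≤ 2 * N ^ 2 := keybound _ _ _ _ (hN₁ i₁) (hN₂ i₂) (hN₁ i₂) (hN₂ i₁)
  have hAle : |Az| ≤ 2 * N ^ 2 := keybound _ _ _ _ (hN₂ i₂) (hN₁ i) (hN₁ i₂) (hN₂ i)
  have hBle : |Bz| ≤ 2 * N ^ 2 := keybound _ _ _ _ (hN₁ i₁) (hN₂ i) (hN₂ i₁) (hN₁ i)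
  have hD1 : (1 : ℤ) ≤ |Dz| := Int.one_le_abs hDz
  -- Az, Bz not both zero
  have hAB : (1 : ℤ) ≤ |Az| + |Bz| := by
    by_contra hcon
    push_neg at hcon
    have hA0 : Az = 0 := by
      have := abs_nonneg Az; have := abs_nonneg Bz
      have : |Az| = 0 := by omega
      exact abs_eq_zero.mp this
    have hB0 : Bz = 0 := by
      have := abs_nonneg Az; have := abs_nonneg Bz
      have : |Bz| = 0 := by omega
      exact abs_eq_zero.mp this
    have hv1i : v₁ i = 0 := by
      have hid : Dz * v₁ i = v₁ i₁ * Az + v₁ i₂ * Bz := by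
        rw [hDzdef, hAzdef, hBzdef]; ring
      rw [hA0, hB0] at hid
      simp only [mul_zero, add_zero] at hid
      rcases mul_eq_zero.mp hid with h | h
      · exact absurd h hDz
      · exact h
    have hv2i : v₂ i = 0 := by
      have hid : Dz * v₂ i = v₂ i₁ * Az + v₂ i₂ * Bz := by
        rw [hDzdef, hAzdef, hBzdef]; ring
      rw [hA0, hB0] at hid
      simp only [mul_zero, add_zero] at hid
      rcases mul_eq_zero.mp hid with h | h
      · exact absurd h hDz
      · exact h
    apply hvi
    rw [hvj, hv1i, hv2i]
    simp
  -- the dual vectors p and q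
  have hDQ : (Dz : ℚ) ≠ 0 := Int.cast_ne_zero.mpr hDz
  set p : Fin d → ℚ := fun j => ((v₂ i₂ : ℚ) * (v₁ j : ℚ) - (v₁ i₂ : ℚ) * (v₂ j : ℚ)) / (Dz : ℚ) with hpdef
  set q : Fin d → ℚ := fun j => ((v₁ i₁ : ℚ) * (v₂ j : ℚ) - (v₂ i₁ : ℚ) * (v₁ j : ℚ)) / (Dz : ℚ) with hqdef
  have hpP : p ∈ P := by
    rw [hP]
    refine Submodule.mem_span_pair.mpr ⟨(v₂ i₂ : ℚ) / (Dz : ℚ), -(v₁ i₂ : ℚ) / (Dz : ℚ), ?_⟩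
    funext j
    simp only [hpdef, Pi.add_apply, Pi.smul_apply, hV₁, hV₂, smul_eq_mul]
    field_simp
    ring
  have hqP : q ∈ P := by
    rw [hP]
    refine Submodule.mem_span_pair.mpr ⟨-(v₂ i₁ : ℚ) / (Dz : ℚ), (v₁ i₁ : ℚ) / (Dz : ℚ), ?_⟩
    funext j
    simp only [hqdef, Pi.add_apply, Pi.smul_apply, hV₁, hV₂, smul_eq_mul]
    field_simp
    ring
  have hDcast : ((v₁ i₁ : ℚ) * (v₂ i₂ : ℚ) - (v₁ i₂ : ℚ) * (v₂ i₁ : ℚ)) = (Dz : ℚ) := by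
    rw [hDzdef]; push_cast; ring
  have hp1 : p i₁ = 1 := by
    show ((v₂ i₂ : ℚ) * (v₁ i₁ : ℚ) - (v₁ i₂ : ℚ) * (v₂ i₁ : ℚ)) / (Dz : ℚ) = 1
    rw [show ((v₂ i₂ : ℚ) * (v₁ i₁ : ℚ) - (v₁ i₂ : ℚ) * (v₂ i₁ : ℚ)) = (Dz : ℚ) by rw [← hDcast]; ring]
    exact div_self hDQ
  have hp2 : p i₂ = 0 := by
    show ((v₂ i₂ : ℚ) * (v₁ i₂ : ℚ) - (v₁ i₂ : ℚ) * (v₂ i₂ : ℚ)) / (Dz : ℚ) = 0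
    rw [show ((v₂ i₂ : ℚ) * (v₁ i₂ : ℚ) - (v₁ i₂ : ℚ) * (v₂ i₂ : ℚ)) = 0 by ring]
    exact zero_div _
  have hq1 : q i₁ = 0 := by
    show ((v₁ i₁ : ℚ) * (v₂ i₁ : ℚ) - (v₂ i₁ : ℚ) * (v₁ i₁ : ℚ)) / (Dz : ℚ) = 0
    rw [show ((v₁ i₁ : ℚ) * (v₂ i₁ : ℚ) - (v₂ i₁ : ℚ) * (v₁ i₁ : ℚ)) = 0 by ring]
    exact zero_div _
  have hq2 : q i₂ = 1 := by
    show ((v₁ i₁ : ℚ) * (v₂ i₂ : ℚ) - (v₂ i₁ : ℚ) * (v₁ i₂ : ℚ)) / (Dz : ℚ) = 1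
    rw [show ((v₁ i₁ : ℚ) * (v₂ i₂ : ℚ) - (v₂ i₁ : ℚ) * (v₁ i₂ : ℚ)) = (Dz : ℚ) by rw [← hDcast]; ring]
    exact div_self hDQ
  -- sign facts for p and q
  have hsp : ∀ j, 0 ≤ t i₁ * p j * t j := by
    have h := hsr (t i₁ • p) (P.smul_mem _ hpP)
      ⟨by simp only [Pi.smul_apply, smul_eq_mul, hp1, mul_one]; rw [ht2 i₁]; norm_num,
       by simp [hp2]⟩
    intro j
    have := h j
    simpa [smul_eq_mul, mul_assoc] using this
  have hsq : ∀ j, 0 ≤ t i₂ * q j * t j := by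
    have h := hsr (t i₂ • q) (P.smul_mem _ hqP)
      ⟨by simp [hq1],
       by simp only [Pi.smul_apply, smul_eq_mul, hq2, mul_one]; rw [ht2 i₂]; norm_num⟩
    intro j
    have := h j
    simpa [smul_eq_mul, mul_assoc] using this
  -- w = w i₁ • p + w i₂ • q
  have hwdec : ∀ j, (w j : ℚ) = (w i₁ : ℚ) * p j + (w i₂ : ℚ) * q j := by
    have hrP : ((fun j => (w j : ℚ)) - (w i₁ : ℚ) • p - (w i₂ : ℚ) • q) ∈ P := by
      refine Submodule.sub_mem _ (Submodule.sub_mem _ ?_ (P.smul_mem _ hpP)) (P.smul_mem _ hqP)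
      rw [hP]; exact hw
    have hr1 : ((fun j => (w j : ℚ)) - (w i₁ : ℚ) • p - (w i₂ : ℚ) • q) i₁ = 0 := by
      simp [hp1, hq1]
    have hr2 : ((fun j => (w j : ℚ)) - (w i₁ : ℚ) • p - (w i₂ : ℚ) • q) i₂ = 0 := by
      simp [hp2, hq2]
    have hr0 := hzero _ hrP hr1 hr2
    intro j
    have := congrFun hr0 j
    simp only [Pi.sub_apply, Pi.smul_apply, smul_eq_mul, Pi.zero_apply] at this
    linarith
  -- the key absolute-value identity
  have hwt : ∀ j, |(w j : ℚ)| = (w j : ℚ) * t j := fun j => habs_eq _ j (hwZ j)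
  have hpi : |p i| = t i₁ * p i * t i := by
    have h := habs_eq (t i₁ * p i) i (hsp i)
    rwa [abs_mul, htabs i₁, one_mul] at h
  have hqi : |q i| = t i₂ * q i * t i := by
    have h := habs_eq (t i₂ * q i) i (hsq i)
    rwa [abs_mul, htabs i₂, one_mul] at h
  have hmain : |(w i : ℚ)| = |(w i₁ : ℚ)| * |p i| + |(w i₂ : ℚ)| * |q i| := by
    rw [hwt i, hwt i₁, hwt i₂, hpi, hqi, hwdec i]
    linear_combination (-(w i₁ : ℚ) * p i * t i) * ht2 i₁ + (-(w i₂ : ℚ) * q i * t i) * ht2 i₂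
  -- cast bounds to ℚ
  have hD1Q : (1 : ℚ) ≤ |(Dz : ℚ)| := by rw [← Int.cast_abs]; exact_mod_cast hD1
  have hDleQ : |(Dz : ℚ)| ≤ 2 * (N : ℚ) ^ 2 := by rw [← Int.cast_abs]; exact_mod_cast hDle
  have hAleQ : |(Az : ℚ)| ≤ 2 * (N : ℚ) ^ 2 := by rw [← Int.cast_abs]; exact_mod_cast hAle
  have hBleQ : |(Bz : ℚ)| ≤ 2 * (N : ℚ) ^ 2 := by rw [← Int.cast_abs]; exact_mod_cast hBle
  have hABQ : (1 : ℚ) ≤ |(Az : ℚ)| + |(Bz : ℚ)| := by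
    rw [← Int.cast_abs, ← Int.cast_abs]; exact_mod_cast hAB
  have hpabs : |p i| = |(Az : ℚ)| / |(Dz : ℚ)| := by
    have : p i = (Az : ℚ) / (Dz : ℚ) := by
      show ((v₂ i₂ : ℚ) * (v₁ i : ℚ) - (v₁ i₂ : ℚ) * (v₂ i : ℚ)) / (Dz : ℚ) = _
      rw [hAzdef]; push_cast; ring
    rw [this, abs_div]
  have hqabs : |q i| = |(Bz : ℚ)| / |(Dz : ℚ)| := by
    have : q i = (Bz : ℚ) / (Dz : ℚ) := by
      show ((v₁ i₁ : ℚ) * (v₂ i : ℚ) - (v₂ i₁ : ℚ) * (v₁ i : ℚ)) / (Dz : ℚ) = _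
      rw [hBzdef]; push_cast; ring
    rw [this, abs_div]
  have hDQabs : (0 : ℚ) < |(Dz : ℚ)| := lt_of_lt_of_le one_pos hD1Q
  have hmain' : |(w i : ℚ)| * |(Dz : ℚ)| = |(w i₁ : ℚ)| * |(Az : ℚ)| + |(w i₂ : ℚ)| * |(Bz : ℚ)| := by
    rw [hmain, hpabs, hqabs]
    field_simp
  have ha : (0 : ℚ) ≤ |(w i₁ : ℚ)| := abs_nonneg _
  have hb : (0 : ℚ) ≤ |(w i₂ : ℚ)| := abs_nonneg _
  have hwi : (0 : ℚ) ≤ |(w i : ℚ)| := abs_nonneg _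
  have hAnn : (0 : ℚ) ≤ |(Az : ℚ)| := abs_nonneg _
  have hBnn : (0 : ℚ) ≤ |(Bz : ℚ)| := abs_nonneg _
  constructor
  · rw [div_le_iff₀ h2N2pos]
    have hm1 : min |(w i₁ : ℚ)| |(w i₂ : ℚ)| ≤ |(w i₁ : ℚ)| := min_le_left _ _
    have hm2 : min |(w i₁ : ℚ)| |(w i₂ : ℚ)| ≤ |(w i₂ : ℚ)| := min_le_right _ _
    have hmnn : (0 : ℚ) ≤ min |(w i₁ : ℚ)| |(w i₂ : ℚ)| := le_min ha hb
    have h1 := le_mul_of_one_le_right hmnn hABQ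
    have h2 := mul_le_mul_of_nonneg_right hm1 hAnn
    have h3 := mul_le_mul_of_nonneg_right hm2 hBnn
    have h4 := mul_le_mul_of_nonneg_left hDleQ hwi
    linarith
  · have h1 := le_mul_of_one_le_right hwi hD1Q
    have h2 := mul_le_mul_of_nonneg_left hAleQ ha
    have h3 := mul_le_mul_of_nonneg_left hBleQ hb
    linarith
end

section
/- Let u, v ∈ ℚ^d and let X ⊆ span{u, v} be a convex set such that X ∩ (ℚ≥0 · u) = ∅ and X ∩ (ℚ≥0 · v) = ∅. Then either X ∩ Cone{u, v} = ∅ or X ⊆ Cone{u, v}, where Cone{u, v} = {a·u + b·v : a, b ∈ ℚ≥0}. -/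
/-- Key lemma: if `x ∈ X` lies in the cone and `y ∈ X` has representation
`c • u + e • v`, then `e ≥ 0`. -/
lemma stmt4_key {d : ℕ} (u v : Fin d → ℚ) (X : Set (Fin d → ℚ))
    (hconv : Convex ℚ X)
    (hu : ∀ x ∈ X, ∀ α : ℚ, 0 ≤ α → x ≠ α • u)
    (hv : ∀ x ∈ X, ∀ α : ℚ, 0 ≤ α → x ≠ α • v)
    (x : Fin d → ℚ) (hxX : x ∈ X) (a b : ℚ) (ha : 0 ≤ a) (hb : 0 ≤ b)
    (hx : x = a • u + b • v)
    (y : Fin d → ℚ) (hyX : y ∈ X) (c e : ℚ) (hy : c • u + e • v = y) :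
    0 ≤ e := by
  by_contra he
  push_neg at he
  have hbe : (0:ℚ) < b - e := by linarith
  set l : ℚ := b / (b - e) with hl
  have hl0 : 0 ≤ l := div_nonneg hb hbe.le
  have hl1 : l ≤ 1 := by rw [div_le_one hbe]; linarith
  have hzX : (1 - l) • x + l • y ∈ X :=
    hconv hxX hyX (by linarith) hl0 (by ring)
  set t : ℚ := (1 - l) * a + l * c with ht
  have hz : (1 - l) • x + l • y = t • u := by
    rw [hx, ← hy]
    match_scalars
    · ring
    · rw [hl]; field_simp; ring
  have htneg : t < 0 := by
    by_contra htn
    push_neg at htn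
    exact hu _ hzX t htn hz
  have hat : (0:ℚ) < a - t := by linarith
  set m : ℚ := a / (a - t) with hm
  have hm0 : 0 ≤ m := div_nonneg ha hat.le
  have hm1 : m ≤ 1 := by rw [div_le_one hat]; linarith
  have hwX : (1 - m) • x + m • ((1 - l) • x + l • y) ∈ X :=
    hconv hxX hzX (by linarith) hm0 (by ring)
  have hw : (1 - m) • x + m • ((1 - l) • x + l • y) = ((1 - m) * b) • v := by
    rw [hz, hx]
    match_scalars
    · rw [hm]; field_simp [sub_ne_zero.mpr hat.ne']; ring
    · ring
  exact hv _ hwX ((1 - m) * b) (mul_nonneg (by linarith) hb) hw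

/-- A convex subset of span{u,v} avoiding the rays of u and v is
either disjoint from Cone{u,v} or contained in it. -/
theorem stmt4 {d : ℕ} (u v : Fin d → ℚ) (X : Set (Fin d → ℚ))
    (hX : X ⊆ (Submodule.span ℚ {u, v} : Set (Fin d → ℚ)))
    (hconv : Convex ℚ X)
    (hu : ∀ x ∈ X, ∀ α : ℚ, 0 ≤ α → x ≠ α • u)
    (hv : ∀ x ∈ X, ∀ α : ℚ, 0 ≤ α → x ≠ α • v) :
    (∀ x ∈ X, ¬ ∃ a b : ℚ, 0 ≤ a ∧ 0 ≤ b ∧ x = a • u + b • v) ∨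
    (∀ x ∈ X, ∃ a b : ℚ, 0 ≤ a ∧ 0 ≤ b ∧ x = a • u + b • v) := by
  by_cases hmem : ∃ x ∈ X, ∃ a b : ℚ, 0 ≤ a ∧ 0 ≤ b ∧ x = a • u + b • v
  · right
    obtain ⟨x, hxX, a, b, ha, hb, hx⟩ := hmem
    intro y hyX
    obtain ⟨c, e, hy⟩ := Submodule.mem_span_pair.mp (hX hyX)
    have he : 0 ≤ e := stmt4_key u v X hconv hu hv x hxX a b ha hb hx y hyX c e hy
    have hc : 0 ≤ c := stmt4_key v u X hconv hv hu x hxX b a hb ha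
      (by rw [hx, add_comm]) y hyX e c (by rw [← hy, add_comm])
    exact ⟨c, e, hc, he, hy.symm⟩
  · left
    intro z hzX hz
    exact hmem ⟨z, hzX, hz⟩
end

section
/- For any v ∈ ℤ^d and W ∈ ℕ, define the generalized beam B^ℤ_{v,W} = {u ∈ ℕ^d : ∃α ∈ ℚ, ‖u - α·v‖ ≤ W}. Then there exist v⁺, v⁻ ∈ ℕ^d with ‖v⁺‖ ≤ ‖v‖ and ‖v⁻‖ ≤ ‖v‖ such that B^ℤ_{v,W} ⊆ B_{v⁺,W} ∪ B_{v⁻,W}, where B_{w,W} = {u ∈ ℕ^d : ∃α ∈ ℚ≥0, ‖u - α·w‖ ≤ W}. -/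
/-- A generalized beam is covered by two (ordinary) beams with
directions of no larger max norm. -/
theorem stmt6 {d : ℕ} (v : Fin d → ℤ) (W : ℕ) :
    ∃ vp vm : Fin d → ℕ,
      (Finset.univ.sup vp ≤ Finset.univ.sup fun i => (v i).natAbs) ∧
      (Finset.univ.sup vm ≤ Finset.univ.sup fun i => (v i).natAbs) ∧
      ∀ u : Fin d → ℕ, (∃ α : ℚ, ∀ i, |(u i : ℚ) - α * (v i : ℚ)| ≤ (W : ℚ)) →
        (∃ α : ℚ, 0 ≤ α ∧ ∀ i, |(u i : ℚ) - α * (vp i : ℚ)| ≤ (W : ℚ)) ∨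
        (∃ α : ℚ, 0 ≤ α ∧ ∀ i, |(u i : ℚ) - α * (vm i : ℚ)| ≤ (W : ℚ)) := by
  refine ⟨fun i => (v i).toNat, fun i => (-(v i)).toNat, ?_, ?_, ?_⟩
  · exact Finset.sup_mono_fun fun i _ => by omega
  · exact Finset.sup_mono_fun fun i _ => by omega
  · rintro u ⟨α, hα⟩
    have hW : (0 : ℚ) ≤ (W : ℚ) := by positivity
    rcases le_or_gt 0 α with h0 | h0
    · refine Or.inl ⟨α, h0, fun i => ?_⟩
      beta_reduce
      have h1 := hα i
      have huq : (0 : ℚ) ≤ (u i : ℚ) := by positivity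
      rcases le_or_gt 0 (v i) with hv | hv
      · rw [show ((v i).toNat : ℚ) = (v i : ℚ) by exact_mod_cast Int.toNat_of_nonneg hv]
        exact h1
      · rw [show ((v i).toNat : ℚ) = 0 by exact_mod_cast Int.toNat_of_nonpos hv.le]
        have hvq : (v i : ℚ) ≤ 0 := by exact_mod_cast hv.le
        rw [abs_le] at h1 ⊢
        constructor <;> nlinarith [h1.1, h1.2]
    · refine Or.inr ⟨-α, by linarith, fun i => ?_⟩
      beta_reduce
      have h1 := hα i
      have huq : (0 : ℚ) ≤ (u i : ℚ) := by positivity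
      rcases le_or_gt (v i) 0 with hv | hv
      · rw [show (((-v i).toNat : ℚ)) = -(v i : ℚ) by
          exact_mod_cast Int.toNat_of_nonneg (by omega : (0:ℤ) ≤ -v i)]
        convert h1 using 2
        ring
      · rw [show (((-v i).toNat : ℚ)) = 0 by
          exact_mod_cast Int.toNat_of_nonpos (by omega : -v i ≤ 0)]
        have hvq : (0 : ℚ) ≤ (v i : ℚ) := by exact_mod_cast hv.le
        rw [abs_le] at h1 ⊢
        constructor <;> nlinarith [h1.1, h1.2]
end

section
/- Let u, v ∈ ℕ² with u ≠ 0 and v ≠ 0. Then the infimum over α ∈ ℚ of ‖u - α·v‖ (max norm) equals |v(1)·u(2) - u(1)·v(2)| / (v(1) + v(2)), and this infimum is attained. -/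
/-- Minimal max-norm distance from a point of ℕ² to the rational
line through a nonzero direction v ∈ ℕ². -/
theorem stmt7 (u v : Fin 2 → ℕ) (hu : u ≠ 0) (hv : v ≠ 0) :
    IsLeast {r : ℚ | ∃ α : ℚ,
        r = max |(u 0 : ℚ) - α * (v 0 : ℚ)| |(u 1 : ℚ) - α * (v 1 : ℚ)|}
      (|(v 0 : ℚ) * (u 1 : ℚ) - (u 0 : ℚ) * (v 1 : ℚ)| / ((v 0 : ℚ) + (v 1 : ℚ))) := by
  have hn : v 0 + v 1 ≠ 0 := by
    intro h
    apply hv; funext i; fin_cases i <;> simp <;> omega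
  have hvs : (0 : ℚ) < (v 0 : ℚ) + (v 1 : ℚ) := by
    have := Nat.pos_of_ne_zero hn
    exact_mod_cast this
  constructor
  · refine ⟨((u 0 : ℚ) + (u 1 : ℚ)) / ((v 0 : ℚ) + (v 1 : ℚ)), ?_⟩
    have ha : (u 0 : ℚ) - (((u 0 : ℚ) + (u 1 : ℚ)) / ((v 0 : ℚ) + (v 1 : ℚ))) * (v 0 : ℚ)
        = -((v 0 : ℚ) * u 1 - u 0 * v 1) / ((v 0 : ℚ) + (v 1 : ℚ)) := by
      field_simp; ring
    have hb : (u 1 : ℚ) - (((u 0 : ℚ) + (u 1 : ℚ)) / ((v 0 : ℚ) + (v 1 : ℚ))) * (v 1 : ℚ)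
        = ((v 0 : ℚ) * u 1 - u 0 * v 1) / ((v 0 : ℚ) + (v 1 : ℚ)) := by
      field_simp; ring
    rw [ha, hb, neg_div, abs_neg, max_self, abs_div, abs_of_pos hvs]
  · rintro r ⟨α, rfl⟩
    rw [div_le_iff₀ hvs]
    have key : |(v 0 : ℚ) * u 1 - u 0 * v 1|
        = |(v 0 : ℚ) * ((u 1 : ℚ) - α * v 1) - (v 1 : ℚ) * ((u 0 : ℚ) - α * v 0)| := by
      congr 1; ring
    rw [key]
    calc |(v 0 : ℚ) * ((u 1 : ℚ) - α * v 1) - (v 1 : ℚ) * ((u 0 : ℚ) - α * v 0)|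
        ≤ |(v 0 : ℚ) * ((u 1 : ℚ) - α * v 1)| + |(v 1 : ℚ) * ((u 0 : ℚ) - α * v 0)| :=
          abs_sub _ _
      _ = (v 0 : ℚ) * |(u 1 : ℚ) - α * v 1| + (v 1 : ℚ) * |(u 0 : ℚ) - α * v 0| := by
          rw [abs_mul, abs_mul, abs_of_nonneg (by positivity : (0:ℚ) ≤ (v 0 : ℚ)),
            abs_of_nonneg (by positivity : (0:ℚ) ≤ (v 1 : ℚ))]
      _ ≤ (v 0 : ℚ) * max |(u 0 : ℚ) - α * (v 0 : ℚ)| |(u 1 : ℚ) - α * (v 1 : ℚ)|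
          + (v 1 : ℚ) * max |(u 0 : ℚ) - α * (v 0 : ℚ)| |(u 1 : ℚ) - α * (v 1 : ℚ)| := by
          gcongr
          · exact le_max_right _ _
          · exact le_max_left _ _
      _ = max |(u 0 : ℚ) - α * (v 0 : ℚ)| |(u 1 : ℚ) - α * (v 1 : ℚ)| * ((v 0 : ℚ) + (v 1 : ℚ)) := by
          ring
end

section
/- Let A ∈ ℕ, A ≥ 1, and let B_{u,A} and B_{v,A} be two distinct A-beams (i.e., u, v ∈ ℕ^d with ‖u‖ ≤ A, ‖v‖ ≤ A, and the two beams are distinct as sets). Then every w ∈ B_{u,A} ∩ B_{v,A} satisfies ‖w‖ ≤ 4A³ + A. -/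
/-- The beam `B_{w,W}` of direction `w : ℕ^d` and width `W`. -/
def beam {d : ℕ} (w : Fin d → ℕ) (W : ℕ) : Set (Fin d → ℕ) :=
  {x | ∃ α : ℚ, 0 ≤ α ∧ ∀ i, |(x i : ℚ) - α * (w i : ℚ)| ≤ (W : ℚ)}

lemma beam_subset {d : ℕ} (u v : Fin d → ℕ) (A : ℕ) (c : ℚ) (hc : 0 ≤ c)
    (h : ∀ i, (u i : ℚ) = c * v i) : beam u A ⊆ beam v A := by
  rintro x ⟨α, hα0, hα⟩
  refine ⟨α * c, mul_nonneg hα0 hc, fun i => ?_⟩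
  have := hα i
  rw [h i] at this
  rw [mul_assoc]
  exact this

/-- Vectors in the intersection of two distinct A-beams have norm
at most 4A³ + A. -/
theorem stmt8 {d : ℕ} (A : ℕ) (hA : 1 ≤ A) (u v : Fin d → ℕ)
    (hu : ∀ i, u i ≤ A) (hv : ∀ i, v i ≤ A)
    (hdist : beam u A ≠ beam v A) :
    ∀ w ∈ beam u A ∩ beam v A, ∀ i, w i ≤ 4 * A ^ 3 + A := by
  by_contra hcon
  push_neg at hcon
  obtain ⟨w, ⟨⟨α, hα0, hαw⟩, ⟨β, hβ0, hβw⟩⟩, i0, hbig⟩ := hcon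
  have hA1 : (1 : ℚ) ≤ (A : ℚ) := by exact_mod_cast hA
  have hbigQ : (4 * (A:ℚ)^3 + A) < (w i0 : ℚ) := by exact_mod_cast hbig
  have hau := abs_le.mp (hαw i0)
  have hbv := abs_le.mp (hβw i0)
  have h1 : (4 * (A:ℚ)^3) < α * u i0 := by linarith [hau.2]
  have h2 : (4 * (A:ℚ)^3) < β * v i0 := by linarith [hbv.2]
  have hu0 : (0:ℚ) < (u i0 : ℚ) := by
    rcases (Nat.cast_nonneg (u i0) : (0:ℚ) ≤ _).lt_or_eq with h | h
    · exact h
    · rw [← h, mul_zero] at h1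
      nlinarith [pow_pos (by linarith : (0:ℚ) < (A:ℚ)) 3]
  have hv0 : (0:ℚ) < (v i0 : ℚ) := by
    rcases (Nat.cast_nonneg (v i0) : (0:ℚ) ≤ _).lt_or_eq with h | h
    · exact h
    · rw [← h, mul_zero] at h2
      nlinarith [pow_pos (by linarith : (0:ℚ) < (A:ℚ)) 3]
  have huA : (u i0 : ℚ) ≤ A := by exact_mod_cast hu i0
  have hvA : (v i0 : ℚ) ≤ A := by exact_mod_cast hv i0
  have hα4 : 4 * (A:ℚ)^2 < α := by nlinarith
  -- cross products vanish
  have cross : ∀ i j, (u i : ℚ) * v j = (u j : ℚ) * v i := by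
    intro i j
    have ci : |α * u i - β * v i| ≤ 2 * A := by
      have h1 := abs_le.mp (hαw i); have h2 := abs_le.mp (hβw i)
      rw [abs_le]; constructor <;> linarith
    have cj : |α * u j - β * v j| ≤ 2 * A := by
      have h1 := abs_le.mp (hαw j); have h2 := abs_le.mp (hβw j)
      rw [abs_le]; constructor <;> linarith
    have hviA : (v i : ℚ) ≤ A := by exact_mod_cast hv i
    have hvjA : (v j : ℚ) ≤ A := by exact_mod_cast hv j
    have hvi0 : (0:ℚ) ≤ (v i : ℚ) := by positivity
    have hvj0 : (0:ℚ) ≤ (v j : ℚ) := by positivity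
    have key : α * ((u i:ℚ) * v j - (u j:ℚ) * v i)
        = (α * u i - β * v i) * v j - (α * u j - β * v j) * v i := by ring
    have bound : |α * ((u i:ℚ) * v j - (u j:ℚ) * v i)| ≤ 4 * (A:ℚ)^2 := by
      rw [key]
      calc |(α * u i - β * v i) * v j - (α * u j - β * v j) * v i|
          ≤ |(α * u i - β * v i) * v j| + |(α * u j - β * v j) * v i| :=
            abs_sub _ _
        _ = |α * u i - β * v i| * |(v j : ℚ)| + |α * u j - β * v j| * |(v i:ℚ)| := by
            rw [abs_mul, abs_mul]
        _ ≤ (2*A) * A + (2*A) * A := by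
            have := abs_nonneg (α * u i - β * v i)
            have := abs_nonneg (α * u j - β * v j)
            rw [abs_of_nonneg hvi0, abs_of_nonneg hvj0]
            have hA0 : (0:ℚ) ≤ A := by linarith
            gcongr
        _ = 4 * (A:ℚ)^2 := by ring
    have habs : |((u i:ℚ) * v j - (u j:ℚ) * v i)| < 1 := by
      by_contra hge
      push_neg at hge
      have : α ≤ |α * ((u i:ℚ) * v j - (u j:ℚ) * v i)| := by
        rw [abs_mul, abs_of_nonneg hα0]
        nlinarith [abs_nonneg ((u i:ℚ) * v j - (u j:ℚ) * v i)]
      linarith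
    -- integrality
    by_contra hne
    have hne' : (u i * v j : ℤ) ≠ (u j * v i : ℤ) := by
      intro h; exact hne (by exact_mod_cast h)
    have h1 : (1:ℤ) ≤ |(u i * v j : ℤ) - (u j * v i : ℤ)| :=
      Int.one_le_abs (sub_ne_zero.mpr hne')
    have h1' : (1:ℚ) ≤ |((u i:ℚ) * v j - (u j:ℚ) * v i)| := by
      have h2 : ((1:ℤ):ℚ) ≤ ((|(u i * v j : ℤ) - (u j * v i : ℤ)| : ℤ) : ℚ) := by
        exact_mod_cast h1
      push_cast at h2
      convert h2 using 2
    linarith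
  -- beams are equal: contradiction
  have hc0 : (0:ℚ) < (u i0 : ℚ) / (v i0 : ℚ) := by positivity
  have hprop : ∀ i, (u i : ℚ) = ((u i0 : ℚ) / (v i0 : ℚ)) * v i := by
    intro i
    have := cross i i0
    field_simp
    linarith
  have hprop' : ∀ i, (v i : ℚ) = ((v i0 : ℚ) / (u i0 : ℚ)) * u i := by
    intro i
    have := cross i0 i
    field_simp
    linarith
  exact hdist (Set.Subset.antisymm
    (beam_subset u v A _ hc0.le hprop)
    (beam_subset v u A _ (by positivity) hprop'))
end

section
/- Let G = (Q, T) be a strongly connected d-VASS and θ a simple cycle in G that is not a self-loop. Then the VASS G/θ obtained by shrinking θ to a single state (with transition effects adjusted by the shift function s) satisfies Cyc(G/θ) = Cyc(G). -/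
/-- A `d`-dimensional vector addition system with states: a type of states and a
set of transitions labelled by integer vectors. -/
structure VASS (d : ℕ) where
  Q : Type
  T : Set (Q × (Fin d → ℤ) × Q)

namespace VASS

variable {d : ℕ} (G : VASS d)

/-- Paths in a VASS, viewed as a labelled directed graph. -/
inductive Path : G.Q → G.Q → Type
  | nil (p : G.Q) : Path p p
  | cons {p q r : G.Q} (a : Fin d → ℤ) (h : (p, a, q) ∈ G.T) (rest : Path q r) :
      Path p r

variable {G}

/-- The effect of a path: the sum of its transition labels. -/
def Path.eff : ∀ {p q : G.Q}, G.Path p q → (Fin d → ℤ)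
  | _, _, .nil _ => 0
  | _, _, .cons a _ rest => a + rest.eff

/-- The length (number of transitions) of a path. -/
def Path.length : ∀ {p q : G.Q}, G.Path p q → ℕ
  | _, _, .nil _ => 0
  | _, _, .cons _ _ rest => rest.length + 1

/-- The list of states visited by a path (including both endpoints). -/
def Path.states : ∀ {p q : G.Q}, G.Path p q → List G.Q
  | p, _, .nil _ => [p]
  | p, _, .cons _ _ rest => p :: rest.states

/-- Concatenation of paths. -/
def Path.append : ∀ {p q r : G.Q}, G.Path p q → G.Path q r → G.Path p r
  | _, _, _, .nil _, ρ => ρ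
  | _, _, _, .cons a h rest, ρ => .cons a h (rest.append ρ)

/-- A path is admissible from the vector `u` if all intermediate configurations
(including source and target) are nonnegative. -/
def Path.Admissible : ∀ {p q : G.Q}, G.Path p q → (Fin d → ℤ) → Prop
  | _, _, .nil _, u => ∀ i, 0 ≤ u i
  | _, _, .cons a _ rest, u => (∀ i, 0 ≤ u i) ∧ rest.Admissible (u + a)

/-- The list of configurations of the run induced by a path from the vector `u`. -/
def Path.configs : ∀ {p q : G.Q}, G.Path p q → (Fin d → ℤ) → List (G.Q × (Fin d → ℤ))
  | p, _, .nil _, u => [(p, u)]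
  | p, _, .cons a _ rest, u => (p, u) :: rest.configs (u + a)

/-- Reachability: `p(u) →* q(v)`. -/
def Reaches (G : VASS d) (p : G.Q) (u : Fin d → ℤ) (q : G.Q) (v : Fin d → ℤ) : Prop :=
  ∃ π : G.Path p q, π.Admissible u ∧ v = u + π.eff

/-- The set of (rationalized) effects of cycles of `G`. -/
def cycEffects (G : VASS d) : Set (Fin d → ℚ) :=
  {v | ∃ (p : G.Q) (π : G.Path p p), v = fun i => ((π.eff i : ℚ))}

/-- The cycle space `Cyc(G)`: the span of all cycle effects. -/
def cycSpace (G : VASS d) : Submodule ℚ (Fin d → ℚ) :=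
  Submodule.span ℚ (cycEffects G)

/-- The traversal number `ς(G)`: the maximal number of distinct states visited
by a path of `G`. -/
noncomputable def travNum (G : VASS d) : ℕ :=
  letI := Classical.decEq G.Q
  sSup {n | ∃ (p q : G.Q) (π : G.Path p q), n = π.states.toFinset.card}

/-- The maximal norm `‖T‖` of a transition of `G`. -/
noncomputable def normT (G : VASS d) : ℕ :=
  sSup {n | ∃ t ∈ G.T, ∃ i, n = (t.2.1 i).natAbs}

/-- The characteristic `χ(G) = ς(G)·‖T‖`. -/
noncomputable def char (G : VASS d) : ℕ := travNum G * normT G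

end VASS

/-! A path of `G` through a state `x` of `θ` splits `θ` into `α ++ β` with `s x = α.eff`, so
shifting every transition `p → q` by `s p - s q` telescopes along paths and makes the effect of
`β ++ γ`, for any two states of `θ`, equal to `θ.eff`. Hence paths of `G` project to paths of
`G/θ` with the shifted effect, and conversely every path of `G/θ` lifts to a path of `G`, where
each jump inside the collapsed state is filled by a piece of `θ`, at the cost of a multiple of
`θ.eff`. On cycles the shift cancels, so each cycle effect of one VASS lies in the cycle space
of the other. -/

namespace VASS

variable {d : ℕ} {G : VASS d} {p₀ : G.Q}

theorem intCast_eff_mem_cycSpace {p : G.Q} (π : G.Path p p) :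
    (fun i => (π.eff i : ℚ)) ∈ G.cycSpace :=
  Submodule.subset_span ⟨p, π, rfl⟩

def IsShift (θ : G.Path p₀ p₀) (s : G.Q → (Fin d → ℤ)) : Prop :=
  ∀ (q : G.Q) (π₁ : G.Path p₀ q) (π₂ : G.Path q p₀), π₁.append π₂ = θ → s q = π₁.eff

namespace Path

theorem eff_append : ∀ {p q r : G.Q} (π : G.Path p q) (ρ : G.Path q r),
    (π.append ρ).eff = π.eff + ρ.eff
  | _, _, _, .nil _, _ => (zero_add _).symm
  | _, _, _, .cons a _ rest, ρ => by
    simp only [append, eff, eff_append rest ρ, add_assoc]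

theorem start_mem_states : ∀ {p q : G.Q} (π : G.Path p q), p ∈ π.states
  | _, _, .nil _ => List.mem_singleton_self _
  | _, _, .cons _ _ _ => List.mem_cons_self

theorem exists_append_eq_of_mem_states {x : G.Q} : ∀ {p r : G.Q} (π : G.Path p r),
    x ∈ π.states → ∃ (π₁ : G.Path p x) (π₂ : G.Path x r), π₁.append π₂ = π
  | _, _, .nil _, hx => by
    obtain rfl := List.mem_singleton.mp hx
    exact ⟨.nil _, .nil _, rfl⟩
  | _, _, .cons a h rest, hx => by
    obtain rfl | hx := List.mem_cons.mp hx
    · exact ⟨.nil _, .cons a h rest, rfl⟩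
    · obtain ⟨π₁, π₂, rfl⟩ := exists_append_eq_of_mem_states rest hx
      exact ⟨.cons a h π₁, π₂, rfl⟩

theorem eff_single {p q : G.Q} {a : Fin d → ℤ} (h : (p, a, q) ∈ G.T) :
    (Path.cons a h (.nil q)).eff = a :=
  add_zero a

variable [DecidableEq G.Q]

/-- The map `h` of the shrinking construction, sending the states of `θ` to its base point. -/
def collapse (θ : G.Path p₀ p₀) (p : G.Q) : G.Q :=
  if p ∈ θ.states then p₀ else p

theorem collapse_of_mem {θ : G.Path p₀ p₀} {p : G.Q} (hp : p ∈ θ.states) :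
    θ.collapse p = p₀ :=
  if_pos hp

theorem collapse_of_not_mem {θ : G.Path p₀ p₀} {p : G.Q} (hp : p ∉ θ.states) :
    θ.collapse p = p :=
  if_neg hp

end Path

variable [DecidableEq G.Q] {θ : G.Path p₀ p₀} {s : G.Q → (Fin d → ℤ)}

variable (θ s) in
/-- The shrunk VASS `G/θ`. -/
def shrink : VASS d where
  Q := G.Q
  T := {tr | ∃ p a q, (p, a, q) ∈ G.T ∧ tr = (θ.collapse p, s p + a - s q, θ.collapse q)}

theorem exists_shrink_path {p q : G.Q} (π : G.Path p q) :
    ∃ π' : (shrink θ s).Path (θ.collapse p) (θ.collapse q), π'.eff = s p + π.eff - s q := by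
  induction π with
  | nil p => exact ⟨.nil _, by simp [Path.eff]⟩
  | @cons p m r a h rest ih =>
    obtain ⟨rest', hrest'⟩ := ih
    refine ⟨.cons (s p + a - s m) ⟨p, a, m, h, rfl⟩ rest', ?_⟩
    simp only [Path.eff] at hrest' ⊢
    rw [hrest']
    abel

/-- Two states with the same image in `G/θ` are joined by a path of `G` whose shifted effect is a
multiple of `θ.eff`: the path `β ++ γ` through `θ` if both lie on `θ`, the empty path otherwise. -/
theorem exists_path_of_collapse_eq (hs : IsShift θ s) {p q : G.Q}
    (hpq : θ.collapse p = θ.collapse q) :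
    ∃ (σ : G.Path p q) (j : ℕ), s p + σ.eff - s q = j • θ.eff := by
  by_cases hp : p ∈ θ.states <;> by_cases hq : q ∈ θ.states
  · obtain ⟨α, β, hαβ⟩ := θ.exists_append_eq_of_mem_states hp
    obtain ⟨γ, δ, hγδ⟩ := θ.exists_append_eq_of_mem_states hq
    refine ⟨β.append γ, 1, ?_⟩
    rw [hs p α β hαβ, hs q γ δ hγδ, Path.eff_append, one_nsmul, ← hαβ, Path.eff_append]
    abel
  · rw [Path.collapse_of_mem hp, Path.collapse_of_not_mem hq] at hpq
    exact absurd (hpq ▸ θ.start_mem_states) hq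
  · rw [Path.collapse_of_not_mem hp, Path.collapse_of_mem hq] at hpq
    exact absurd (hpq ▸ θ.start_mem_states) hp
  · rw [Path.collapse_of_not_mem hp, Path.collapse_of_not_mem hq] at hpq
    subst hpq
    exact ⟨.nil _, 0, by simp [Path.eff]⟩

theorem exists_path_of_shrink_path (hs : IsShift θ s) {x y : (shrink θ s).Q}
    (π' : (shrink θ s).Path x y) {p : G.Q} (hp : θ.collapse p = x) :
    ∃ q, θ.collapse q = y ∧
      ∃ (ρ : G.Path p q) (k : ℕ), s p + ρ.eff - s q = π'.eff + k • θ.eff := by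
  induction π' generalizing p with
  | nil => exact ⟨p, hp, .nil _, 0, by simp [Path.eff]⟩
  | cons b hb rest ih =>
    obtain ⟨p₁, a, q₁, h, heq⟩ := hb
    cases heq
    obtain ⟨σ, j, hσ⟩ := exists_path_of_collapse_eq hs hp
    obtain ⟨q, hq, ρ, k, hρ⟩ := ih rfl
    refine ⟨q, hq, σ.append ((Path.cons a h (.nil q₁)).append ρ), j + k, ?_⟩
    have hσ' : σ.eff = j • θ.eff - s p + s p₁ := by rw [← hσ]; abel
    have hρ' : ρ.eff = rest.eff + k • θ.eff - s q₁ + s q := by rw [← hρ]; abel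
    change _ = s p₁ + a - s q₁ + rest.eff + (j + k) • θ.eff
    rw [Path.eff_append, Path.eff_append, Path.eff_single, hσ', hρ', add_nsmul]
    abel

theorem exists_cycle_of_shrink_cycle (hs : IsShift θ s) {x : (shrink θ s).Q}
    (π' : (shrink θ s).Path x x) :
    ∃ (p : G.Q) (ρ : G.Path p p) (n : ℕ), ρ.eff = π'.eff + n • θ.eff := by
  cases π' with
  | nil => exact ⟨p₀, .nil p₀, 0, by simp [Path.eff]⟩
  | cons b hb rest =>
    obtain ⟨p, _, _, _, hb_eq⟩ := id hb
    have hp : θ.collapse p = x := (congrArg Prod.fst hb_eq).symm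
    obtain ⟨q, hq, ρ, k, hρ⟩ := exists_path_of_shrink_path hs (.cons b hb rest) hp
    obtain ⟨σ, j, hσ⟩ := exists_path_of_collapse_eq hs (hq.trans hp.symm)
    refine ⟨p, ρ.append σ, k + j, ?_⟩
    rw [Path.eff_append, add_nsmul, ← add_assoc, ← hρ, ← hσ]
    abel

theorem cycSpace_shrink (hs : IsShift θ s) : (shrink θ s).cycSpace = G.cycSpace := by
  apply le_antisymm
  · refine Submodule.span_le.mpr ?_
    rintro _ ⟨x, π', rfl⟩
    obtain ⟨p, ρ, n, hρ⟩ := exists_cycle_of_shrink_cycle hs π'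
    have hcast : (fun i => (π'.eff i : ℚ))
        = (fun i => (ρ.eff i : ℚ)) - (n : ℚ) • fun i => (θ.eff i : ℚ) := by
      funext i
      simp [hρ]
    rw [SetLike.mem_coe, hcast]
    exact sub_mem (intCast_eff_mem_cycSpace ρ)
      (Submodule.smul_mem _ _ (intCast_eff_mem_cycSpace θ))
  · refine Submodule.span_le.mpr ?_
    rintro _ ⟨p, π, rfl⟩
    obtain ⟨π', hπ'⟩ := exists_shrink_path (θ := θ) (s := s) π
    rw [add_sub_cancel_left] at hπ'
    rw [← hπ']
    exact intCast_eff_mem_cycSpace π'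

end VASS

theorem stmt10_general {d : ℕ} (G : VASS d) [DecidableEq G.Q]
    (p₀ : G.Q) (θ : G.Path p₀ p₀)
    (s : G.Q → (Fin d → ℤ))
    (hs : ∀ (q : G.Q) (π₁ : G.Path p₀ q) (π₂ : G.Path q p₀),
      π₁.append π₂ = θ → s q = π₁.eff) :
    VASS.cycSpace
      { Q := G.Q
        T := {tr | ∃ p a q, (p, a, q) ∈ G.T ∧
          tr = ((if p ∈ θ.states then p₀ else p), s p + a - s q,
                (if q ∈ θ.states then p₀ else q))} }
      = VASS.cycSpace G :=
  VASS.cycSpace_shrink hs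

/-- Cycle shrinking preserves the cycle space. The shrunk VASS
`G/θ` identifies all states on the simple (non-self-loop) cycle `θ` with its
base point `p₀` and adjusts transition effects by the shift function `s`. -/
theorem stmt10 {d : ℕ} (G : VASS d) [DecidableEq G.Q]
    (hconn : ∀ p q : G.Q, Nonempty (G.Path p q))
    (p₀ : G.Q) (θ : G.Path p₀ p₀)
    (hsimple : θ.states.dropLast.Nodup)
    (hlen : 2 ≤ θ.length)
    (s : G.Q → (Fin d → ℤ))
    (hs0 : ∀ q, q ∉ θ.states → s q = 0)
    (hs : ∀ (q : G.Q) (π₁ : G.Path p₀ q) (π₂ : G.Path q p₀),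
      π₁.append π₂ = θ → s q = π₁.eff) :
    VASS.cycSpace
      { Q := G.Q
        T := {tr | ∃ p a q, (p, a, q) ∈ G.T ∧
          tr = ((if p ∈ θ.states then p₀ else p), s p + a - s q,
                (if q ∈ θ.states then p₀ else q))} }
      = VASS.cycSpace G :=
  stmt10_general G p₀ θ s hs
end

section
/- Let a, b, d ∈ ℤ with a > 0, b > 0, d > 0. For (x, y) ∈ ℕ², we have a·x + b·y ≥ d if and only if there exists m in the finite set M := {(x₀, ⌈(d - a·x₀)/b⌉) : x₀ = 0, 1, …, ⌈d/a⌉} with (x, y) ≥ m componentwise. -/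
/-- Characterization of the upward-closed set
`{(x,y) ∈ ℕ² : a·x + b·y ≥ D}` by its finitely many minimal elements. -/
theorem stmt16 (a b D : ℤ) (ha : 0 < a) (hb : 0 < b) (hD : 0 < D) (x y : ℕ) :
    D ≤ a * x + b * y ↔
      ∃ x₀ : ℕ, (x₀ : ℤ) ≤ ⌈(D : ℚ) / (a : ℚ)⌉ ∧ (x₀ : ℤ) ≤ (x : ℤ) ∧
        max 0 ⌈((D : ℚ) - (a : ℚ) * (x₀ : ℚ)) / (b : ℚ)⌉ ≤ (y : ℤ) := by
  have hbQ : (0 : ℚ) < (b : ℚ) := by exact_mod_cast hb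
  have haQ : (0 : ℚ) < (a : ℚ) := by exact_mod_cast ha
  have key : ∀ x₀ : ℕ, (⌈((D : ℚ) - (a : ℚ) * (x₀ : ℚ)) / (b : ℚ)⌉ ≤ (y : ℤ)
      ↔ D - a * x₀ ≤ b * y) := by
    intro x₀
    rw [Int.ceil_le, div_le_iff₀ hbQ]
    constructor <;> intro h
    · have h2 : (((D - a * x₀ : ℤ)) : ℚ) ≤ (((b * y : ℤ)) : ℚ) := by
        push_cast at h ⊢; linarith
      exact_mod_cast h2
    · have h2 : (((D - a * x₀ : ℤ)) : ℚ) ≤ (((b * y : ℤ)) : ℚ) := by exact_mod_cast h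
      push_cast at h2 ⊢; linarith
  constructor
  · intro h
    set c := ⌈(D : ℚ) / (a : ℚ)⌉ with hc
    by_cases hx : (x : ℤ) ≤ c
    · refine ⟨x, hx, le_refl _, ?_⟩
      rw [max_le_iff]
      exact ⟨Int.ofNat_nonneg y, (key x).mpr (by linarith)⟩
    · have hc1 : 0 < c := by
        apply Int.ceil_pos.mpr
        positivity
      refine ⟨c.toNat, ?_, ?_, ?_⟩
      · simp [Int.toNat_of_nonneg hc1.le]
      · rw [Int.toNat_of_nonneg hc1.le]; omega
      · rw [max_le_iff]
        refine ⟨Int.ofNat_nonneg y, le_trans ?_ (Int.ofNat_nonneg y)⟩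
        apply Int.ceil_le.mpr
        push_cast
        apply div_nonpos_of_nonpos_of_nonneg _ hbQ.le
        have h1 : (D : ℚ) / a ≤ c := Int.le_ceil _
        have h2 : (D : ℚ) ≤ a * c := by
          rw [div_le_iff₀ haQ] at h1; linarith
        rw [show ((c.toNat : ℕ) : ℚ) = (c : ℚ) by exact_mod_cast Int.toNat_of_nonneg hc1.le]
        linarith
  · rintro ⟨x₀, -, hx, hy⟩
    have h2 := (key x₀).mp (le_trans (le_max_right _ _) hy)
    have : a * x₀ ≤ a * x := by
      apply mul_le_mul_of_nonneg_left hx ha.le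
    linarith
end

section
/- Let U ⊆ ℤ² be a finite set of vectors with ‖u‖ ≤ N for all u ∈ U, such that U contains no vector that is vertical (first coordinate 0, second positive) or horizontal (second coordinate 0, first positive), and the cone generated by U contains no positive vector (both coordinates > 0). Then every c in the ℕ-cone of U (finite sums of elements of U with ℕ coefficients) with c(1) > 0 satisfies c(2) ≤ -c(1)/N. -/
/-- If a finite `U ⊆ ℤ²` of vectors of norm ≤ N contains no
vertical or horizontal semi-positive vector and its rational cone contains no
positive vector, then every `c` in its ℕ-cone with `c 1 > 0` has
`c 2 ≤ -c 1 / N`. -/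
theorem stmt19 (N : ℤ) (hN : 1 ≤ N) (U : Finset (ℤ × ℤ))
    (hbound : ∀ u ∈ U, |u.1| ≤ N ∧ |u.2| ≤ N)
    (hnovert : ∀ u ∈ U, ¬(u.1 = 0 ∧ 0 < u.2))
    (hnohoriz : ∀ u ∈ U, ¬(u.2 = 0 ∧ 0 < u.1))
    (hnopos : ¬ ∃ a : ℤ × ℤ → ℚ, (∀ u, 0 ≤ a u) ∧
      0 < ∑ u ∈ U, a u * (u.1 : ℚ) ∧ 0 < ∑ u ∈ U, a u * (u.2 : ℚ)) :
    ∀ a : ℤ × ℤ → ℕ,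
      0 < ∑ u ∈ U, (a u : ℤ) * u.1 →
      (∑ u ∈ U, (a u : ℚ) * (u.2 : ℚ)) ≤ -(∑ u ∈ U, (a u : ℚ) * (u.1 : ℚ)) / (N : ℚ) := by
  intro a hc1
  have hNQ : (1 : ℚ) ≤ (N : ℚ) := by exact_mod_cast hN
  -- Step 1: every v ∈ U with v.1 > 0 has v.2 < 0
  have hneg : ∀ v ∈ U, 0 < v.1 → v.2 < 0 := by
    intro v hv hv1
    rcases lt_trichotomy v.2 0 with h | h | h
    · exact h
    · exact absurd ⟨h, hv1⟩ (hnohoriz v hv)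
    · exfalso
      apply hnopos
      refine ⟨fun w => if w = v then 1 else 0, fun w => by positivity, ?_, ?_⟩
      · have : (∑ u ∈ U, (if u = v then (1:ℚ) else 0) * (u.1 : ℚ)) = (v.1 : ℚ) := by
          rw [Finset.sum_eq_single v]
          · simp
          · intro b _ hb; simp [hb]
          · intro h; exact absurd hv h
        rw [this]; exact_mod_cast hv1
      · have : (∑ u ∈ U, (if u = v then (1:ℚ) else 0) * (u.2 : ℚ)) = (v.2 : ℚ) := by
          rw [Finset.sum_eq_single v]
          · simp
          · intro b _ hb; simp [hb]
          · intro h; exact absurd hv h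
        rw [this]; exact_mod_cast h
  -- Step 2: cross inequality
  have hcross : ∀ u ∈ U, u.1 < 0 → 0 < u.2 → ∀ v ∈ U, 0 < v.1 →
      u.2 * v.1 ≤ u.1 * v.2 := by
    intro u hu hu1 hu2 v hv hv1
    by_contra hlt
    push_neg at hlt
    have hdet : (1 : ℤ) ≤ u.2 * v.1 - u.1 * v.2 := by omega
    have huv : u ≠ v := by
      intro h; rw [h] at hu1; omega
    apply hnopos
    have hv2 : v.2 < 0 := hneg v hv hv1
    have hv2N : -N ≤ v.2 := by have := abs_le.mp (hbound v hv).2; omega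
    refine ⟨fun w => if w = u then (v.1 : ℚ) else if w = v then (-(u.1 : ℚ) + 1/(2*N)) else 0,
      ?_, ?_, ?_⟩
    · intro w
      by_cases h1 : w = u
      · simp [h1]; exact_mod_cast hv1.le
      · by_cases h2 : w = v
        · simp only [if_neg h1, if_pos h2]
          have h0 : (0:ℚ) < 1/(2*N) := by positivity
          have : (1:ℚ) ≤ -(u.1:ℚ) := by exact_mod_cast (by omega : (1:ℤ) ≤ -u.1)
          linarith
        · simp [h1, h2]
    · have hsum : (∑ w ∈ U, (if w = u then (v.1 : ℚ) else if w = v then (-(u.1 : ℚ) + 1/(2*N)) else 0) * (w.1 : ℚ))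
          = (v.1 : ℚ) * u.1 + (-(u.1 : ℚ) + 1/(2*N)) * v.1 := by
        rw [← Finset.sum_subset (Finset.insert_subset hu (Finset.singleton_subset_iff.mpr hv))]
        · rw [Finset.sum_insert (by simp [huv]), Finset.sum_singleton]
          simp [huv, Ne.symm huv]
        · intro x hx hnx
          simp only [Finset.mem_insert, Finset.mem_singleton, not_or] at hnx
          simp [hnx.1, hnx.2]
      rw [hsum]
      have hv1Q : (1:ℚ) ≤ (v.1:ℚ) := by exact_mod_cast (by omega : (1:ℤ) ≤ v.1)
      have h0 : (0:ℚ) < 1/(2*N) := by positivity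
      nlinarith
    · have hsum : (∑ w ∈ U, (if w = u then (v.1 : ℚ) else if w = v then (-(u.1 : ℚ) + 1/(2*N)) else 0) * (w.2 : ℚ))
          = (v.1 : ℚ) * u.2 + (-(u.1 : ℚ) + 1/(2*N)) * v.2 := by
        rw [← Finset.sum_subset (Finset.insert_subset hu (Finset.singleton_subset_iff.mpr hv))]
        · rw [Finset.sum_insert (by simp [huv]), Finset.sum_singleton]
          simp [huv, Ne.symm huv]
        · intro x hx hnx
          simp only [Finset.mem_insert, Finset.mem_singleton, not_or] at hnx
          simp [hnx.1, hnx.2]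
      rw [hsum]
      have hdetQ : (1:ℚ) ≤ (u.2:ℚ) * v.1 - (u.1:ℚ) * v.2 := by exact_mod_cast hdet
      have hv2NQ : -(N:ℚ) ≤ (v.2:ℚ) := by exact_mod_cast hv2N
      have hNpos : (0:ℚ) < N := by linarith
      have key : (1/(2*N) : ℚ) * v.2 ≥ -(1/2 : ℚ) := by
        rw [ge_iff_le, div_mul_eq_mul_div, le_div_iff₀ (by positivity)]
        nlinarith
      nlinarith
  -- Step 3: there is v₀ ∈ U with v₀.1 > 0
  have hex : ∃ v ∈ U, 0 < v.1 := by
    by_contra h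
    push_neg at h
    have : (∑ u ∈ U, (a u : ℤ) * u.1) ≤ 0 := by
      apply Finset.sum_nonpos
      intro u hu
      exact mul_nonpos_of_nonneg_of_nonpos (by positivity) (h u hu)
    omega
  -- minimizer of (-v.2)/v.1 over T' := U.filter (0 < ·.1)
  obtain ⟨v₀, hv₀mem, hv₀min⟩ := Finset.exists_min_image (U.filter (fun v => 0 < v.1))
    (fun v => (-(v.2:ℚ)) / (v.1:ℚ)) (by
      obtain ⟨v, hv, hv1⟩ := hex
      exact ⟨v, Finset.mem_filter.mpr ⟨hv, hv1⟩⟩)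
  rw [Finset.mem_filter] at hv₀mem
  obtain ⟨hv₀U, hv₀1⟩ := hv₀mem
  set ρ : ℚ := (-(v₀.2:ℚ)) / (v₀.1:ℚ) with hρ
  have hv₀2 : v₀.2 < 0 := hneg v₀ hv₀U hv₀1
  have hv₀1Q : (1:ℚ) ≤ (v₀.1:ℚ) := by exact_mod_cast (by omega : (1:ℤ) ≤ v₀.1)
  have hv₀1N : (v₀.1:ℚ) ≤ N := by exact_mod_cast le_of_abs_le (hbound v₀ hv₀U).1
  have hv₀2Q : (1:ℚ) ≤ -(v₀.2:ℚ) := by exact_mod_cast (by omega : (1:ℤ) ≤ -v₀.2)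
  have hNpos : (0:ℚ) < N := by linarith
  have hρN : 1 / (N:ℚ) ≤ ρ := by
    rw [hρ, div_le_div_iff₀ hNpos (by linarith)]
    nlinarith
  have hρpos : 0 < ρ := lt_of_lt_of_le (by positivity) hρN
  -- Step 4: pointwise bound u.2 ≤ -ρ * u.1 for u ∈ U
  have hpw : ∀ u ∈ U, (u.2:ℚ) ≤ -ρ * (u.1:ℚ) := by
    intro u hu
    rcases lt_trichotomy u.1 0 with h1 | h1 | h1
    · rcases le_or_gt u.2 0 with h2 | h2
      · have : (u.2:ℚ) ≤ 0 := by exact_mod_cast h2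
        have hu1Q : (u.1:ℚ) < 0 := by exact_mod_cast h1
        nlinarith
      · have hc := hcross u hu h1 h2 v₀ hv₀U hv₀1
        have hcQ : (u.2:ℚ) * v₀.1 ≤ (u.1:ℚ) * v₀.2 := by exact_mod_cast hc
        have hv₀1pos : (0:ℚ) < (v₀.1:ℚ) := by linarith
        rw [hρ]
        rw [neg_div, neg_neg, div_mul_eq_mul_div, le_div_iff₀ hv₀1pos]
        nlinarith
    · have h2 : u.2 ≤ 0 := by
        by_contra h
        exact hnovert u hu ⟨h1, by omega⟩
      have : (u.1:ℚ) = 0 := by exact_mod_cast h1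
      rw [this, mul_zero]
      exact_mod_cast h2
    · have hmin : ρ ≤ -(u.2:ℚ)/(u.1:ℚ) := hv₀min u (Finset.mem_filter.mpr ⟨hu, h1⟩)
      have hu1pos : (0:ℚ) < (u.1:ℚ) := by exact_mod_cast h1
      rw [le_div_iff₀ hu1pos] at hmin
      linarith
  -- Step 5: sum up
  have hc1Q : 0 < ∑ u ∈ U, (a u : ℚ) * (u.1 : ℚ) := by
    have : ((∑ u ∈ U, (a u : ℤ) * u.1 : ℤ) : ℚ) = ∑ u ∈ U, (a u : ℚ) * (u.1 : ℚ) := by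
      push_cast; rfl
    rw [← this]; exact_mod_cast hc1
  have hsum : (∑ u ∈ U, (a u : ℚ) * (u.2 : ℚ)) ≤ -ρ * ∑ u ∈ U, (a u : ℚ) * (u.1 : ℚ) := by
    calc (∑ u ∈ U, (a u : ℚ) * (u.2 : ℚ))
        ≤ ∑ u ∈ U, (a u : ℚ) * (-ρ * (u.1 : ℚ)) := by
          apply Finset.sum_le_sum
          intro u hu
          exact mul_le_mul_of_nonneg_left (hpw u hu) (by positivity)
      _ = -ρ * ∑ u ∈ U, (a u : ℚ) * (u.1 : ℚ) := by
          rw [Finset.mul_sum]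
          apply Finset.sum_congr rfl
          intros; ring
  calc (∑ u ∈ U, (a u : ℚ) * (u.2 : ℚ)) ≤ -ρ * ∑ u ∈ U, (a u : ℚ) * (u.1 : ℚ) := hsum
    _ ≤ -(∑ u ∈ U, (a u : ℚ) * (u.1 : ℚ)) / (N : ℚ) := by
        rw [neg_div]
        have h1 : (∑ u ∈ U, (a u : ℚ) * (u.1 : ℚ)) / (N : ℚ) ≤ ρ * ∑ u ∈ U, (a u : ℚ) * (u.1 : ℚ) := by
          rw [div_le_iff₀ hNpos]
          have hρN' : (1:ℚ) ≤ ρ * N := by rwa [div_le_iff₀ hNpos] at hρN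
          nlinarith
        linarith
end
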